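/- arXiv:0802.0919 — 3 statements merged into one kernel-verified Lean document; each statement's English description precedes it below -/
import Mathlib

section
/- For any T > 0 and d ∈ ℕ, the set of d×d matrices A with nonnegative integer entries such that A is irreducible (some power of A has all entries strictly positive) and the Perron–Frobenius eigenvalue λ(A) is less than T, is finite. -/
/-!
An entry of `A` closes a cycle through the diagonal: if `0 < (A ^ m) j i` then
`A i j ≤ A i j * (A ^ m) j i ≤ (A ^ (m + 1)) i i`, and a positive eigenvector `v` for `μ` gives
`(A ^ n) i i * v i ≤ (A ^ n *ᵥ v) i = μ ^ n * v i`. Irreducibility provides such an `m`, and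
cutting cycles out of the corresponding walk makes `m ≤ d`, so every entry is at most
`max 1 μ ^ (d + 1)`: the matrices in question have bounded integer entries.
-/

namespace Matrix

section Nonneg

variable {ι R : Type*} [Fintype ι] [DecidableEq ι] [Semiring R] [PartialOrder R]
  [IsOrderedRing R] {A : Matrix ι ι R}

theorem apply_mul_pow_apply_le_pow_succ_apply (hA : ∀ i j, 0 ≤ A i j) (m : ℕ) (i j : ι) :
    A i j * (A ^ m) j i ≤ (A ^ (m + 1)) i i := by
  rw [pow_succ', mul_apply]
  exact Finset.single_le_sum (f := fun l => A i l * (A ^ m) l i)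
    (fun l _ => mul_nonneg (hA i l) (pow_apply_nonneg hA m l i)) (Finset.mem_univ j)

variable [PosMulStrictMono R]

theorem pow_add_apply_pos_iff (hA : ∀ i j, 0 ≤ A i j) (s t : ℕ) (i j : ι) :
    0 < (A ^ (s + t)) i j ↔ ∃ l, 0 < (A ^ s) i l ∧ 0 < (A ^ t) l j := by
  have hs := pow_apply_nonneg hA s
  have ht := pow_apply_nonneg hA t
  rw [pow_add, mul_apply, Finset.sum_pos_iff_of_nonneg fun l _ => mul_nonneg (hs i l) (ht l j)]
  simp only [Finset.mem_univ, true_and]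
  refine exists_congr fun l => ⟨fun h => ⟨?_, ?_⟩, fun h => mul_pos h.1 h.2⟩
  · exact (hs i l).lt_of_ne fun h0 => h.ne' (by rw [← h0, zero_mul])
  · exact (ht l j).lt_of_ne fun h0 => h.ne' (by rw [← h0, mul_zero])

/-- A walk longer than `Fintype.card ι` visits some vertex twice; removing the cycle between the
two visits leaves a shorter walk with the same endpoints. -/
theorem exists_le_card_pow_apply_pos (hA : ∀ i j, 0 ≤ A i j) {i j : ι} {k : ℕ}
    (hk : 0 < (A ^ k) i j) : ∃ m ≤ Fintype.card ι, 0 < (A ^ m) i j := by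
  induction k using Nat.strong_induction_on with
  | _ k ih =>
  by_cases hkd : k ≤ Fintype.card ι
  · exact ⟨k, hkd, hk⟩
  have hsplit (t : Fin (Fintype.card ι + 1)) : ∃ l, 0 < (A ^ (t : ℕ)) i l ∧ 0 < (A ^ (k - t)) l j :=
    (pow_add_apply_pos_iff hA _ _ i j).1 (by rwa [Nat.add_sub_cancel' (by omega)])
  choose l hl₁ hl₂ using hsplit
  obtain ⟨p, q, hpq, hl⟩ := Fintype.exists_ne_map_eq_of_card_lt l (by simp)
  wlog hlt : p < q generalizing p q
  · exact this q p hpq.symm hl.symm (lt_of_le_of_ne (not_lt.1 hlt) hpq.symm)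
  have hshort : 0 < (A ^ (p + (k - q) : ℕ)) i j :=
    (pow_add_apply_pos_iff hA _ _ i j).2 ⟨l p, hl₁ p, hl ▸ hl₂ q⟩
  exact ih _ (by omega) hshort

end Nonneg

section Eigenvector

variable {ι R : Type*} [Fintype ι] [CommSemiring R] {B : Matrix ι ι R}
  {v : ι → R} {μ : R}

theorem pow_mulVec_eq_of_mulVec_eq [DecidableEq ι] (h : B *ᵥ v = μ • v) (n : ℕ) :
    (B ^ n) *ᵥ v = μ ^ n • v := by
  induction n with
  | zero => simp
  | succ n ih => rw [pow_succ, ← mulVec_mulVec, h, mulVec_smul, ih, smul_smul, pow_succ']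

variable [LinearOrder R] [IsStrictOrderedRing R]

theorem pow_apply_self_le [DecidableEq ι] (hB : ∀ i j, 0 ≤ B i j) (hv : ∀ i, 0 < v i)
    (h : B *ᵥ v = μ • v) (n : ℕ) (i : ι) : (B ^ n) i i ≤ μ ^ n := by
  refine le_of_mul_le_mul_right ?_ (hv i)
  calc (B ^ n) i i * v i ≤ ∑ l, (B ^ n) i l * v l :=
        Finset.single_le_sum (fun l _ => mul_nonneg (pow_apply_nonneg hB n i l) (hv l).le)
          (Finset.mem_univ i)
    _ = μ ^ n * v i := by
        simpa [mulVec, dotProduct] using congrFun (pow_mulVec_eq_of_mulVec_eq h n) i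

theorem eigenvalue_nonneg_of_pos_eigenvector [Nonempty ι] (hB : ∀ i j, 0 ≤ B i j)
    (hv : ∀ i, 0 < v i) (h : B *ᵥ v = μ • v) : 0 ≤ μ := by
  obtain ⟨i⟩ := ‹Nonempty ι›
  have hμv : μ * v i = ∑ l, B i l * v l := by
    simpa [mulVec, dotProduct] using (congrFun h i).symm
  refine nonneg_of_mul_nonneg_left ?_ (hv i)
  rw [hμv]
  exact Finset.sum_nonneg fun l _ => mul_nonneg (hB i l) (hv l).le

end Eigenvector

theorem intCast_apply_le_of_pos_eigenvector {ι R : Type*} [Fintype ι] [DecidableEq ι]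
    [CommRing R] [LinearOrder R] [IsStrictOrderedRing R] {A : Matrix ι ι ℤ}
    (hA : ∀ i j, 0 ≤ A i j) {i j : ι} {k : ℕ} (hk : 0 < (A ^ k) j i) {v : ι → R} {μ : R}
    (hv : ∀ i, 0 < v i) (h : A.map (Int.cast : ℤ → R) *ᵥ v = μ • v) :
    (A i j : R) ≤ max 1 μ ^ (Fintype.card ι + 1) := by
  obtain ⟨m, hm, hpos⟩ := exists_le_card_pow_apply_pos hA hk
  have hB : ∀ i j, (0 : R) ≤ A.map Int.cast i j := fun i j => Int.cast_nonneg (hA i j)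
  have hcast : ((A ^ (m + 1)) i i : R) = (A.map Int.cast ^ (m + 1)) i i := by
    simpa using congrFun₂ (A.map_pow (Int.castRingHom R) (m + 1)) i i
  have hcycle : A i j ≤ (A ^ (m + 1)) i i :=
    (le_mul_of_one_le_right (hA i j) hpos).trans (apply_mul_pow_apply_le_pow_succ_apply hA m i j)
  have hμ : 0 ≤ μ := haveI : Nonempty ι := ⟨i⟩; eigenvalue_nonneg_of_pos_eigenvector hB hv h
  calc (A i j : R) ≤ (A.map Int.cast ^ (m + 1)) i i := hcast ▸ Int.cast_le.2 hcycle
    _ ≤ μ ^ (m + 1) := pow_apply_self_le hB hv h _ i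
    _ ≤ max 1 μ ^ (m + 1) := pow_le_pow_left₀ hμ (le_max_right 1 μ) _
    _ ≤ max 1 μ ^ (Fintype.card ι + 1) := pow_le_pow_right₀ (le_max_left 1 μ) (by omega)

end Matrix

theorem stmt2_general (d : ℕ) (T : ℝ) :
    {A : Matrix (Fin d) (Fin d) ℤ |
      (∀ i j, 0 ≤ A i j) ∧
      (∃ k : ℕ, 1 ≤ k ∧ ∀ i j, 0 < (A ^ k) i j) ∧
      (∃ (μ : ℝ) (v : Fin d → ℝ), μ < T ∧ (∀ i, 0 < v i) ∧
        (A.map (Int.cast : ℤ → ℝ)).mulVec v = μ • v)}.Finite := by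
  refine (Set.Finite.pi' fun _ => Set.Finite.pi' fun _ =>
    Set.finite_Icc (0 : ℤ) ⌈max 1 T ^ (d + 1)⌉).subset ?_
  rintro A ⟨hA, ⟨k, -, hk⟩, μ, v, hμT, hv, hAv⟩ i j
  have hentry := Matrix.intCast_apply_le_of_pos_eigenvector hA (hk j i) hv hAv
  rw [Fintype.card_fin] at hentry
  have hbound : max 1 μ ^ (d + 1) ≤ max 1 T ^ (d + 1) :=
    pow_le_pow_left₀ (zero_le_one.trans (le_max_left 1 μ)) (max_le_max_left 1 hμT.le) _
  exact ⟨hA i j, Int.cast_le.1 ((hentry.trans hbound).trans (Int.le_ceil _))⟩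

/-- For any T > 0 and d, the set of d×d nonnegative integer matrices that
are irreducible (some power has all entries strictly positive) and whose
Perron–Frobenius eigenvalue (the eigenvalue admitting a strictly positive eigenvector)
is less than T, is finite. -/
theorem stmt2 (d : ℕ) (T : ℝ) (hT : 0 < T) :
    {A : Matrix (Fin d) (Fin d) ℤ |
      (∀ i j, 0 ≤ A i j) ∧
      (∃ k : ℕ, 1 ≤ k ∧ ∀ i j, 0 < (A ^ k) i j) ∧
      (∃ (μ : ℝ) (v : Fin d → ℝ), μ < T ∧ (∀ i, 0 < v i) ∧
        (A.map (Int.cast : ℤ → ℝ)).mulVec v = μ • v)}.Finite :=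
  stmt2_general d T
end

section
/- Let A be a d×d nonnegative integer matrix that is irreducible, and suppose its Perron–Frobenius eigenvalue satisfies λ(A) < T. Then every entry of A is strictly less than T^d. (Consequently the set of irreducible nonnegative integer d×d matrices with λ(A) < T is finite.) -/
/-!
Reading off one term of `(A ^ k) v = μ ^ k v` gives `(A ^ k) a b * v b ≤ μ ^ k * v a`. As the
entries are integers, an edge `a → b` (`0 < A a b`) gives `v b ≤ μ * v a`, and `1 ≤ (A ^ k) a a`
gives `1 ≤ μ`. By irreducibility some edge leaves every nonempty proper set of indices, so the
sublevel sets `{x | v x ≤ μ ^ m * v j}` gain a point at each step until they exhaust the `d`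
indices: `v i ≤ μ ^ (d - 1) * v j`. Hence `A i j * v j ≤ μ * v i ≤ μ ^ d * v j`, i.e.
`A i j ≤ μ ^ d < T ^ d`.
-/

open Finset

theorem Quiver.Path.exists_hom_of_mem_of_notMem {V : Type*} [Quiver V] {S : Set V} {a b : V}
    (p : Quiver.Path a b) (ha : a ∈ S) (hb : b ∉ S) : ∃ x ∈ S, ∃ y ∉ S, Nonempty (x ⟶ y) := by
  induction p with
  | nil => exact absurd ha hb
  | @cons c _ p e ih =>
    by_cases hc : c ∈ S
    · exact ⟨c, hc, _, hb, ⟨e⟩⟩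
    · exact ih hc

theorem le_pow_card_sub_one_mul_of_forall_exists_rel {ι R : Type*} [Fintype ι]
    [CommSemiring R] [LinearOrder R] [IsOrderedRing R] (r : ι → ι → Prop) {f : ι → R} {c : R}
    (hc : 1 ≤ c) (hf : ∀ a b, r a b → f b ≤ c * f a)
    (hr : ∀ S : Finset ι, ∀ a ∈ S, ∀ b ∉ S, ∃ x ∈ S, ∃ y ∉ S, r x y)
    (i j : ι) (hj : 0 ≤ f j) : f i ≤ c ^ (Fintype.card ι - 1) * f j := by
  classical
  set S : ℕ → Finset ι := fun m => {x | f x ≤ c ^ m * f j} with hS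
  have hjS (m : ℕ) : j ∈ S m := by
    simpa [hS] using le_mul_of_one_le_left hj (one_le_pow₀ hc)
  have hmono (m : ℕ) : S m ⊆ S (m + 1) := by
    intro x hx
    simp only [hS, mem_filter, mem_univ, true_and] at hx ⊢
    exact hx.trans (mul_le_mul_of_nonneg_right (pow_le_pow_right₀ hc m.le_succ) hj)
  have hgrow (m : ℕ) : S m = univ ∨ m + 1 ≤ #(S m) := by
    induction m with
    | zero => exact .inr (card_pos.2 ⟨j, hjS 0⟩)
    | succ m ih =>
      by_cases huniv : S m = univ
      · exact .inl (eq_univ_of_forall fun x => hmono m (huniv ▸ mem_univ x))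
      obtain ⟨b₀, hb₀⟩ : ∃ b, b ∉ S m := by simpa [eq_univ_iff_forall] using huniv
      obtain ⟨a, ha, b, hb, hab⟩ := hr (S m) j (hjS m) b₀ hb₀
      have hb' : b ∈ S (m + 1) := by
        simp only [hS, mem_filter, mem_univ, true_and] at ha ⊢
        calc f b ≤ c * f a := hf a b hab
          _ ≤ c * (c ^ m * f j) := mul_le_mul_of_nonneg_left ha (zero_le_one.trans hc)
          _ = c ^ (m + 1) * f j := by ring
      have := card_lt_card (Finset.ssubset_iff_subset_ne.2 ⟨hmono m, fun h => hb (h ▸ hb')⟩)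
      exact .inr (by have := ih.resolve_left huniv; omega)
  have hfull : S (Fintype.card ι - 1) = univ := by
    rcases hgrow (Fintype.card ι - 1) with h | h
    · exact h
    · exact eq_univ_of_card _ (le_antisymm (card_le_univ _) (by omega))
  have hi : i ∈ S (Fintype.card ι - 1) := hfull ▸ mem_univ i
  simpa [hS] using hi

namespace Matrix

variable {n R : Type*} [Fintype n]

theorem exists_pos_apply_of_pow_apply_pos [DecidableEq n] [Ring R] [LinearOrder R]
    [IsOrderedRing R] [PosMulStrictMono R] [Nontrivial R] {A : Matrix n n R}
    (hA : ∀ i j, 0 ≤ A i j) {k : ℕ} {S : Set n} {a b : n} (ha : a ∈ S) (hb : b ∉ S)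
    (hab : 0 < (A ^ k) a b) : ∃ x ∈ S, ∃ y ∉ S, 0 < A x y := by
  let := toQuiver A
  obtain ⟨⟨p, -⟩⟩ := (pow_apply_pos_iff_nonempty_path hA k a b).1 hab
  obtain ⟨x, hx, y, hy, ⟨e⟩⟩ := p.exists_hom_of_mem_of_notMem ha hb
  exact ⟨x, hx, y, hy, e.down⟩

theorem pow_mulVec_of_mulVec_eq_smul [DecidableEq n] [CommSemiring R] {M : Matrix n n R}
    {μ : R} {v : n → R} (h : M *ᵥ v = μ • v) (k : ℕ) : (M ^ k) *ᵥ v = μ ^ k • v := by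
  induction k with
  | zero => simp
  | succ k ih => rw [pow_succ, ← mulVec_mulVec, h, mulVec_smul, ih, smul_smul, pow_succ']

theorem apply_mul_le_mulVec {m : Type*} [Semiring R] [PartialOrder R] [IsOrderedRing R]
    {M : Matrix m n R} (hM : ∀ i j, 0 ≤ M i j) {v : n → R} (hv : ∀ i, 0 ≤ v i) (a : m) (b : n) :
    M a b * v b ≤ (M *ᵥ v) a :=
  single_le_sum (fun l _ => mul_nonneg (hM a l) (hv l)) (mem_univ b)

theorem pow_apply_mul_le_of_mulVec_eq_smul [DecidableEq n] [CommSemiring R] [PartialOrder R]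
    [IsOrderedRing R] {M : Matrix n n R} (hM : ∀ i j, 0 ≤ M i j) {μ : R} {v : n → R}
    (hv : ∀ i, 0 ≤ v i) (heig : M *ᵥ v = μ • v) (k : ℕ) (a b : n) :
    (M ^ k) a b * v b ≤ μ ^ k * v a := by
  simpa [pow_mulVec_of_mulVec_eq_smul heig] using
    apply_mul_le_mulVec (pow_apply_nonneg hM k) hv a b

theorem one_le_of_mulVec_eq_smul [DecidableEq n] [CommSemiring R] [LinearOrder R]
    [IsStrictOrderedRing R] {M : Matrix n n R} (hM : ∀ i j, 0 ≤ M i j) {μ : R} {v : n → R}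
    (hv : ∀ i, 0 < v i) (heig : M *ᵥ v = μ • v) {k : ℕ} (hk : k ≠ 0) {a : n}
    (ha : 1 ≤ (M ^ k) a a) : 1 ≤ μ := by
  have hv0 : ∀ i, 0 ≤ v i := fun i => (hv i).le
  have hμ : 0 ≤ μ := by
    have := (mul_nonneg (hM a a) (hv0 a)).trans (apply_mul_le_mulVec hM hv0 a a)
    rw [heig, Pi.smul_apply, smul_eq_mul] at this
    exact nonneg_of_mul_nonneg_left this (hv a)
  have hμk : 1 * v a ≤ μ ^ k * v a :=
    (mul_le_mul_of_nonneg_right ha (hv0 a)).trans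
      (pow_apply_mul_le_of_mulVec_eq_smul hM hv0 heig k a a)
  exact (one_le_pow_iff_of_nonneg hμ hk).1 (le_of_mul_le_mul_right hμk (hv a))

end Matrix

/-- An irreducible nonnegative integer d×d matrix whose Perron–Frobenius
eigenvalue is < T has every entry strictly less than T^d. -/
theorem stmt3 (d : ℕ) (T : ℝ) (A : Matrix (Fin d) (Fin d) ℤ)
    (hnn : ∀ i j, 0 ≤ A i j)
    (hirr : ∃ k : ℕ, 1 ≤ k ∧ ∀ i j, 0 < (A ^ k) i j)
    (μ : ℝ) (v : Fin d → ℝ) (hv : ∀ i, 0 < v i)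
    (heig : (A.map (Int.cast : ℤ → ℝ)).mulVec v = μ • v)
    (hμ : μ < T) :
    ∀ i j, (A i j : ℝ) < T ^ d := by
  obtain ⟨k, hk, hpos⟩ := hirr
  intro i j
  have hv0 : ∀ a, 0 ≤ v a := fun a => (hv a).le
  have hM : ∀ a b, 0 ≤ A.map (Int.cast : ℤ → ℝ) a b := fun a b => by simpa using hnn a b
  have hmap (m : ℕ) : A.map (Int.cast : ℤ → ℝ) ^ m = (A ^ m).map Int.cast :=
    (Matrix.map_pow A (Int.castRingHom ℝ) m).symm
  have hpow (m : ℕ) (a b : Fin d) : (A ^ m) a b * v b ≤ μ ^ m * v a := by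
    simpa [hmap] using Matrix.pow_apply_mul_le_of_mulVec_eq_smul hM hv0 heig m a b
  have hμ1 : 1 ≤ μ := Matrix.one_le_of_mulVec_eq_smul hM hv heig (k := k) (by omega) (a := i) <| by
    simpa [hmap] using (show (1 : ℝ) ≤ (A ^ k) i i by exact_mod_cast hpos i i)
  have hedge (a b : Fin d) (hab : 0 < A a b) : v b ≤ μ * v a :=
    (le_mul_of_one_le_left (hv0 b) (show (1 : ℝ) ≤ A a b by exact_mod_cast hab)).trans
      (by simpa using hpow 1 a b)
  have hleave (S : Finset (Fin d)) : ∀ a ∈ S, ∀ b ∉ S, ∃ x ∈ S, ∃ y ∉ S, 0 < A x y :=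
    fun a ha b hb => Matrix.exists_pos_apply_of_pow_apply_pos hnn (S := ↑S) ha hb (hpos a b)
  have hratio : v i ≤ μ ^ (d - 1) * v j := by
    simpa using le_pow_card_sub_one_mul_of_forall_exists_rel _ hμ1 hedge hleave i j (hv0 j)
  have hd : d - 1 + 1 = d := Nat.sub_add_cancel i.pos
  have hAij : A i j * v j ≤ μ ^ d * v j := calc
    A i j * v j ≤ μ * v i := by simpa using hpow 1 i j
    _ ≤ μ * (μ ^ (d - 1) * v j) := mul_le_mul_of_nonneg_left hratio (by linarith)
    _ = μ ^ d * v j := by rw [← mul_assoc, ← pow_succ', hd]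
  calc (A i j : ℝ) ≤ μ ^ d := le_of_mul_le_mul_right hAij (hv j)
    _ < T ^ d := pow_lt_pow_left₀ hμ (by linarith) (by omega)
end

section
/- For fixed m ∈ ℕ and T > 0, the set N(m,T) of pairs (A, D) where A ∈ Mat_m(ℤ≥0) is symmetric, D ∈ Mat_m(ℤ≥0) is diagonal, DA is irreducible nonnegative, and the Perron–Frobenius eigenvalue λ(DA) < T, is finite. -/
/-!
Write `B = D * A`. If `v > 0` and `B v = μ v`, then each single term of the eigenvalue equation
gives `B i j * v j ≤ μ * v i`; multiplying this with the same inequality for `(j, i)` and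
cancelling `v i * v j` yields `B i j * B j i ≤ μ ^ 2 < T ^ 2`. Irreducibility makes every row of
`B` nonzero, so every diagonal entry of `D` is at least `1`, and then symmetry of `A` turns
`B i j * B j i = D i i * D j j * A i j ^ 2` into a bound on every entry of `A` and of `D`.
-/

open Matrix

lemma Matrix.finite_setOf_forall_apply_mem_Icc {ι κ α : Type*} [Finite ι] [Finite κ]
    [Preorder α] [LocallyFiniteOrder α] (a b : α) :
    {M : Matrix ι κ α | ∀ i j, M i j ∈ Set.Icc a b}.Finite :=
  (Set.Finite.pi fun _ => Set.Finite.pi fun _ => Set.finite_Icc a b).subset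
    fun _ hM i _ j _ => hM i j

section Eigenvector

variable {ι R : Type*} [Fintype ι] [CommRing R] [LinearOrder R] [IsStrictOrderedRing R]
  {B : Matrix ι ι R} {v : ι → R} {μ : R}

lemma Matrix.apply_mul_le_of_mulVec_eq_smul (hB : ∀ i j, 0 ≤ B i j) (hv : ∀ i, 0 ≤ v i)
    (h : B *ᵥ v = μ • v) (i j : ι) : B i j * v j ≤ μ * v i := by
  have hi : ∑ l, B i l * v l = μ * v i := by simpa [mulVec, dotProduct] using congrFun h i
  rw [← hi]
  exact Finset.single_le_sum (fun l _ => mul_nonneg (hB i l) (hv l)) (Finset.mem_univ j)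

lemma Matrix.nonneg_of_mulVec_eq_smul (hB : ∀ i j, 0 ≤ B i j) (hv : ∀ i, 0 < v i)
    (h : B *ᵥ v = μ • v) (i : ι) : 0 ≤ μ := by
  have := (mul_nonneg (hB i i) (hv i).le).trans
    (apply_mul_le_of_mulVec_eq_smul hB (fun l => (hv l).le) h i i)
  exact nonneg_of_mul_nonneg_left this (hv i)

lemma Matrix.apply_mul_apply_le_sq_of_mulVec_eq_smul (hB : ∀ i j, 0 ≤ B i j)
    (hv : ∀ i, 0 < v i) (h : B *ᵥ v = μ • v) (i j : ι) : B i j * B j i ≤ μ ^ 2 := by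
  have hij := apply_mul_le_of_mulVec_eq_smul hB (fun l => (hv l).le) h i j
  have hji := apply_mul_le_of_mulVec_eq_smul hB (fun l => (hv l).le) h j i
  have hprod : B i j * v j * (B j i * v i) ≤ μ * v i * (μ * v j) :=
    mul_le_mul hij hji (mul_nonneg (hB j i) (hv i).le)
      ((mul_nonneg (hB i j) (hv j).le).trans hij)
  have hvv : 0 < v i * v j := mul_pos (hv i) (hv j)
  exact le_of_mul_le_mul_right (by linarith) hvv

end Eigenvector

lemma Matrix.exists_apply_ne_zero_of_pow_apply_ne_zero {ι R : Type*} [Fintype ι] [DecidableEq ι]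
    [Semiring R] {M : Matrix ι ι R} {k : ℕ} (hk : k ≠ 0) {i j : ι} (h : (M ^ k) i j ≠ 0) :
    ∃ l, M i l ≠ 0 := by
  obtain ⟨k, rfl⟩ := Nat.exists_eq_succ_of_ne_zero hk
  by_contra! hrow
  rw [pow_succ', mul_apply] at h
  exact h (Finset.sum_eq_zero fun l _ => by rw [hrow l, zero_mul])

lemma Matrix.diagonal_mul_apply_mul_apply_of_isSymm {ι R : Type*} [Fintype ι] [DecidableEq ι]
    [CommSemiring R] {d : ι → R} {A : Matrix ι ι R} (hA : A.IsSymm) (i j : ι) :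
    (diagonal d * A) i j * (diagonal d * A) j i = d i * d j * A i j ^ 2 := by
  rw [diagonal_mul, diagonal_mul, hA.apply i j]
  ring

section DiagonalMulSymm

variable {ι : Type*} [Fintype ι] [DecidableEq ι] {d : ι → ℤ} {A : Matrix ι ι ℤ} {N : ℤ}

lemma one_le_of_diagonal_mul_row_ne_zero (hA0 : ∀ i j, 0 ≤ A i j) (hd0 : ∀ i, 0 ≤ d i)
    (hrow : ∀ i, ∃ l, (diagonal d * A) i l ≠ 0) (i : ι) : 1 ≤ d i ∧ ∃ l, 1 ≤ A i l := by
  obtain ⟨l, hl⟩ := hrow i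
  rw [diagonal_mul] at hl
  have hd : d i ≠ 0 := left_ne_zero_of_mul hl
  have ha : A i l ≠ 0 := right_ne_zero_of_mul hl
  exact ⟨by have := hd0 i; omega, l, by have := hA0 i l; omega⟩

lemma apply_le_of_diagonal_mul_apply_mul_apply_le (hA : A.IsSymm) (hA0 : ∀ i j, 0 ≤ A i j)
    (hd0 : ∀ i, 0 ≤ d i) (hrow : ∀ i, ∃ l, (diagonal d * A) i l ≠ 0)
    (hN : ∀ i j, (diagonal d * A) i j * (diagonal d * A) j i ≤ N) (i j : ι) :
    A i j ≤ N := by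
  have hdi := (one_le_of_diagonal_mul_row_ne_zero hA0 hd0 hrow i).1
  have hdj := (one_le_of_diagonal_mul_row_ne_zero hA0 hd0 hrow j).1
  have h := hN i j
  rw [diagonal_mul_apply_mul_apply_of_isSymm hA] at h
  calc A i j ≤ A i j ^ 2 := Int.le_self_sq _
    _ ≤ d i * d j * A i j ^ 2 :=
      le_mul_of_one_le_left (sq_nonneg _) (one_le_mul_of_one_le_of_one_le hdi hdj)
    _ ≤ N := h

lemma diagonal_apply_le_of_diagonal_mul_apply_mul_apply_le (hA : A.IsSymm)
    (hA0 : ∀ i j, 0 ≤ A i j) (hd0 : ∀ i, 0 ≤ d i) (hrow : ∀ i, ∃ l, (diagonal d * A) i l ≠ 0)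
    (hN : ∀ i j, (diagonal d * A) i j * (diagonal d * A) j i ≤ N) (i j : ι) :
    diagonal d i j ≤ N := by
  obtain ⟨hdi, l, hl⟩ := one_le_of_diagonal_mul_row_ne_zero hA0 hd0 hrow i
  have hdl := (one_le_of_diagonal_mul_row_ne_zero hA0 hd0 hrow l).1
  have hdiN : d i ≤ N := by
    have h := hN i l
    rw [diagonal_mul_apply_mul_apply_of_isSymm hA] at h
    calc d i ≤ d i * (d l * A i l ^ 2) :=
          le_mul_of_one_le_right (hd0 i) (one_le_mul_of_one_le_of_one_le hdl (one_le_pow₀ hl))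
      _ ≤ N := by rwa [← mul_assoc]
  rw [diagonal_apply]
  split_ifs with hij
  · exact hij ▸ hdiN
  · linarith

end DiagonalMulSymm

theorem stmt12_general (m : ℕ) (T : ℝ) :
    {p : Matrix (Fin m) (Fin m) ℤ × Matrix (Fin m) (Fin m) ℤ |
      p.1.IsSymm ∧ (∀ i j, 0 ≤ p.1 i j) ∧
      p.2.IsDiag ∧ (∀ i j, 0 ≤ p.2 i j) ∧
      (∃ k : ℕ, 1 ≤ k ∧ ∀ i j, 0 < ((p.2 * p.1) ^ k) i j) ∧
      (∃ (μ : ℝ) (v : Fin m → ℝ), μ < T ∧ (∀ i, 0 < v i) ∧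
        ((p.2 * p.1).map (Int.cast : ℤ → ℝ)).mulVec v = μ • v)}.Finite := by
  set N : ℤ := ⌊T ^ 2⌋
  have hbox := finite_setOf_forall_apply_mem_Icc (ι := Fin m) (κ := Fin m) 0 N
  refine (hbox.prod hbox).subset ?_
  rintro ⟨A, D⟩ ⟨hA, hA0, hD, hD0, ⟨k, hk, hpos⟩, μ, v, hμT, hv, heig⟩
  obtain ⟨d, rfl⟩ : ∃ d, D = diagonal d := ⟨D.diag, hD.diagonal_diag.symm⟩
  have hd0 (i : Fin m) : 0 ≤ d i := by simpa using hD0 i i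
  have hB0 (i j : Fin m) : 0 ≤ (diagonal d * A) i j := by
    rw [diagonal_mul]; exact mul_nonneg (hd0 i) (hA0 i j)
  have hrow (i : Fin m) : ∃ l, (diagonal d * A) i l ≠ 0 :=
    exists_apply_ne_zero_of_pow_apply_ne_zero (by omega) (hpos i i).ne'
  have hB0' (i j : Fin m) : (0 : ℝ) ≤ ((diagonal d * A).map (Int.cast : ℤ → ℝ)) i j := by
    rw [map_apply]; exact_mod_cast hB0 i j
  have hN (i j : Fin m) : (diagonal d * A) i j * (diagonal d * A) j i ≤ N := by
    have hμ := nonneg_of_mulVec_eq_smul hB0' hv heig i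
    refine Int.le_floor.mpr ?_
    push_cast
    exact (apply_mul_apply_le_sq_of_mulVec_eq_smul hB0' hv heig i j).trans
      (pow_le_pow_left₀ hμ hμT.le 2)
  exact ⟨fun i j => ⟨hA0 i j, apply_le_of_diagonal_mul_apply_mul_apply_le hA hA0 hd0 hrow hN i j⟩,
    fun i j =>
      ⟨hD0 i j, diagonal_apply_le_of_diagonal_mul_apply_mul_apply_le hA hA0 hd0 hrow hN i j⟩⟩

/-- for fixed m and T > 0, the set of pairs (A, D) with A symmetric
nonnegative integer, D diagonal nonnegative integer, DA irreducible nonnegative and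
with Perron–Frobenius eigenvalue < T, is finite. -/
theorem stmt12 (m : ℕ) (T : ℝ) (hT : 0 < T) :
    {p : Matrix (Fin m) (Fin m) ℤ × Matrix (Fin m) (Fin m) ℤ |
      p.1.IsSymm ∧ (∀ i j, 0 ≤ p.1 i j) ∧
      p.2.IsDiag ∧ (∀ i j, 0 ≤ p.2 i j) ∧
      (∃ k : ℕ, 1 ≤ k ∧ ∀ i j, 0 < ((p.2 * p.1) ^ k) i j) ∧
      (∃ (μ : ℝ) (v : Fin m → ℝ), μ < T ∧ (∀ i, 0 < v i) ∧
        ((p.2 * p.1).map (Int.cast : ℤ → ℝ)).mulVec v = μ • v)}.Finite :=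
  stmt12_general m T
end
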